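/- arXiv:1605.06743 — 3 statements merged into one kernel-verified Lean document; each statement's English description precedes it below -/
import Mathlib

section
/- Fix L ≥ 1, N = 4^L, M ≥ 1 and widths r₀,…,r_{L−1} ≥ 1, and let A(w) denote the deep convolutional arithmetic circuit coefficient tensor determined by the weight vector w consisting of all entries of a^{0,α} (α ∈ [r₀]), a^l (l = 1,…,L−1) and a^L. Then for any partition of Fin N into disjoint subsets I and J with I ∪ J = univ, the function w ↦ rank ⟦A(w)⟧_{I,J} attains its maximum value almost everywhere: the set of weight vectors w at which rank ⟦A(w)⟧_{I,J} is strictly smaller than its maximum over all weight vectors has Lebesgue measure zero. -/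
open MeasureTheory

noncomputable section

/-- Matricization of a tensor `A` of order `N` and dimension `M` in each mode, with
respect to a partition `(I, J)` of `Fin N` (given `I ∪ J = univ`). -/
def matricize {N M : ℕ} (A : (Fin N → Fin M) → ℝ) (I J : Finset (Fin N))
    (hU : I ∪ J = Finset.univ) :
    Matrix ({n // n ∈ I} → Fin M) ({n // n ∈ J} → Fin M) ℝ :=
  Matrix.of fun u v => A fun n =>
    if h : n ∈ I then u ⟨n, h⟩
    else v ⟨n, by
      have hn : n ∈ I ∪ J := by rw [hU]; exact Finset.mem_univ n
      exact (Finset.mem_union.mp hn).resolve_left h⟩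

/-- The index in `Fin (4 * n)` of position `i` inside the `t`-th block of size `n`. -/
def blockIdx {n : ℕ} (t : Fin 4) (i : Fin n) : Fin (4 * n) :=
  ⟨t.val * n + i.val, by
    have h1 : i.val < n := i.isLt
    have h2 : t.val ≤ 3 := Nat.lt_succ_iff.mp t.isLt
    calc t.val * n + i.val < t.val * n + n := by omega
      _ = (t.val + 1) * n := by ring
      _ ≤ 4 * n := Nat.mul_le_mul_right n (by omega)⟩

/-- Fourth tensor power of an order-`n` tensor: an order-`4n` tensor. -/
def tpow4 {n M : ℕ} (T : (Fin n → Fin M) → ℝ) : (Fin (4 * n) → Fin M) → ℝ :=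
  fun d => ∏ t : Fin 4, T (fun i => d (blockIdx t i))

/-- Recast an order-`n` tensor as an order-`m` tensor along an equality `n = m`. -/
def castT {n m M : ℕ} (h : n = m) (T : (Fin n → Fin M) → ℝ) : (Fin m → Fin M) → ℝ :=
  fun d => T (fun i => d (Fin.cast h i))

theorem four_mul_pow (L : ℕ) (hL : 1 ≤ L) : 4 * 4 ^ (L - 1) = 4 ^ L := by
  obtain ⟨K, rfl⟩ := Nat.exists_eq_add_of_le hL
  rw [show 1 + K - 1 = K from by omega, pow_add, pow_one]

/-- The hidden tensors `φ^{l,γ}` of a deep convolutional arithmetic circuit, where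
`φ^{0,α}` is the order-1 tensor given by `a0 α`, and
`φ^{l+1,γ} = ∑ α, a l γ α • (φ^{l,α})^{⊗4}`  (so `a l` plays the role of `a^{l+1}`). -/
def phi (M : ℕ) (r : ℕ → ℕ) (a0 : Fin (r 0) → Fin M → ℝ)
    (a : (l : ℕ) → Fin (r (l + 1)) → Fin (r l) → ℝ) :
    (l : ℕ) → Fin (r l) → (Fin (4 ^ l) → Fin M) → ℝ
  | 0, γ => fun d => a0 γ (d ⟨0, by norm_num⟩)
  | (l + 1), γ => fun d => ∑ α : Fin (r l), a l γ α *
      castT (show 4 * 4 ^ l = 4 ^ (l + 1) by rw [pow_succ]; ring)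
        (tpow4 (phi M r a0 a l α)) d

/-- The coefficient tensor of a deep convolutional arithmetic circuit:
`A = ∑ α, aL α • (φ^{L-1,α})^{⊗4}`, of order `N = 4^L`. -/
def deepA (L M : ℕ) (hL : 1 ≤ L) (r : ℕ → ℕ) (a0 : Fin (r 0) → Fin M → ℝ)
    (a : (l : ℕ) → Fin (r (l + 1)) → Fin (r l) → ℝ)
    (aL : Fin (r (L - 1)) → ℝ) : (Fin (4 ^ L) → Fin M) → ℝ :=
  castT (four_mul_pow L hL)
    (fun d => ∑ α : Fin (r (L - 1)), aL α * tpow4 (phi M r a0 a (L - 1) α) d)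

/-- `inducedCard I l k` is the cardinality of the induced set `I_{l,k}`: the number of
`m ∈ [4^l]` (zero-based) such that `k·4^l + m ∈ I`. -/
def inducedCard {N : ℕ} (I : Finset (Fin N)) (l k : ℕ) : ℕ :=
  (I.filter (fun n => k * 4 ^ l ≤ n.val ∧ n.val < (k + 1) * 4 ^ l)).card

/-- The Euclidean space of all weights of the deep network: `a^{0,α}` for `α ∈ [r₀]`,
the matrices `a^l ∈ ℝ^{r_l × r_{l-1}}` for `l = 1,…,L-1`, and `a^L ∈ ℝ^{r_{L-1}}`. -/
abbrev WeightSpace (L M : ℕ) (r : ℕ → ℕ) : Type :=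
  (Fin (r 0) → Fin M → ℝ) ×
    ((l : Fin (L - 1)) → Fin (r (l.val + 1)) → Fin (r l.val) → ℝ) ×
    (Fin (r (L - 1)) → ℝ)

/-- Extend the finitely many middle-layer weight matrices to all levels
(levels `≥ L-1` are never used by the coefficient tensor of an `L`-layer network). -/
def extendMid (L : ℕ) (r : ℕ → ℕ)
    (a : (l : Fin (L - 1)) → Fin (r (l.val + 1)) → Fin (r l.val) → ℝ) :
    (l : ℕ) → Fin (r (l + 1)) → Fin (r l) → ℝ :=
  fun l => if h : l < L - 1 then a ⟨l, h⟩ else fun _ _ => 0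

/-- The deep convolutional arithmetic circuit coefficient tensor as a function of the
weight vector. -/
def deepAw (L M : ℕ) (hL : 1 ≤ L) (r : ℕ → ℕ) (w : WeightSpace L M r) :
    (Fin (4 ^ L) → Fin M) → ℝ :=
  deepA L M hL r w.1 (extendMid L r w.2.1) w.2.2

/-!
Every entry of `⟦A(w)⟧_{I,J}` is a polynomial in the weights `w`. Pick `w₀` of maximal rank
`ρ`; some `ρ × ρ` minor of `⟦A(w₀)⟧_{I,J}` is nonzero, so this minor, viewed as a
polynomial in `w`, is not identically zero and its zero set is Lebesgue-null (by induction on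
the number of variables and Fubini). Outside this zero set the rank is at least `ρ`.
-/

theorem exists_linearIndependent_comp_fin {K V ι : Type*} [Field K] [AddCommGroup V]
    [Module K V] [Finite ι] (g : ι → V) {k : ℕ}
    (hk : Module.finrank K (Submodule.span K (Set.range g)) = k) :
    ∃ s : Fin k → ι, LinearIndependent K (g ∘ s) := by
  obtain ⟨b, -, -, hspan, hli⟩ := exists_linearIndepOn_extension (linearIndepOn_empty K g)
    (Set.empty_subset Set.univ)
  have : Fintype b := Fintype.ofFinite b
  have hspan_eq : Submodule.span K (Set.range g) =
      Submodule.span K (Set.range fun i : b => g i) := by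
    rw [← Set.image_eq_range]
    exact le_antisymm (Submodule.span_le.2 (by simpa using hspan))
      (Submodule.span_mono (Set.image_subset_range _ _))
  have hcard : Fintype.card b = k := by
    rw [← hk, hspan_eq, finrank_span_eq_card hli.linearIndependent]
  let e := Fintype.equivFinOfCardEq hcard
  exact ⟨Subtype.val ∘ e.symm, hli.comp e.symm e.symm.injective⟩

namespace Matrix

variable {K m n : Type*} [Field K] [Fintype n]

theorem le_rank_of_submatrix_det_ne_zero (A : Matrix m n K) {k : ℕ} (u : Fin k → m)
    (v : Fin k → n) (h : (A.submatrix u v).det ≠ 0) : k ≤ A.rank := by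
  simpa using (rank_of_det_ne_zero h).symm.trans_le (A.rank_submatrix_le u v)

theorem exists_submatrix_det_ne_zero [Fintype m] (A : Matrix m n K) :
    ∃ (u : Fin A.rank → m) (v : Fin A.rank → n), (A.submatrix u v).det ≠ 0 := by
  obtain ⟨u, hu⟩ := exists_linearIndependent_comp_fin A.row (A.rank_eq_finrank_span_row).symm
  have hrank : (A.submatrix u id).rank = A.rank := by
    simpa using LinearIndependent.rank_matrix (M := A.submatrix u id) hu
  obtain ⟨v, hv⟩ := exists_linearIndependent_comp_fin (A.submatrix u id).col
    ((A.submatrix u id).rank_eq_finrank_span_cols.symm.trans hrank)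
  refine ⟨u, v, ((isUnit_iff_isUnit_det _).1 ?_).ne_zero⟩
  exact linearIndependent_cols_iff_isUnit.1 hv

end Matrix

theorem MvPolynomial.volume_setOf_eval_eq_zero {n : ℕ} {p : MvPolynomial (Fin n) ℝ}
    (hp : p ≠ 0) : volume {x | eval x p = 0} = 0 := by
  induction n with
  | zero =>
    obtain ⟨x₀, hx₀⟩ : ∃ x₀, eval x₀ p ≠ 0 := by
      by_contra! h
      exact hp (MvPolynomial.funext fun x => by simp [h])
    convert measure_empty (μ := (volume : Measure (Fin 0 → ℝ)))
    exact Set.eq_empty_of_forall_notMem fun x hx => hx₀ (Subsingleton.elim x x₀ ▸ hx)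
  | succ n ih =>
    set q := finSuccEquiv ℝ n p
    have hq : q ≠ 0 := by simpa [q] using hp
    have hcons (y : ℝ) (s : Fin n → ℝ) :
        eval (Fin.cons y s) p = eval s (Polynomial.eval (C y) q) := by
      rw [eval_polynomial_eval_finSuccEquiv, eval_C]
      rfl
    have hroots : {y : ℝ | Polynomial.eval (C y) q = 0}.Finite :=
      (Polynomial.finite_setOfPred_isRoot hq).preimage (C_injective _ _).injOn
    let T : Set (ℝ × (Fin n → ℝ)) := {z | eval (Fin.cons z.1 z.2) p = 0}
    have hT : MeasurableSet T :=
      measurableSet_eq_fun ((continuous_eval p).comp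
        (continuous_fst.finCons continuous_snd)).measurable measurable_const
    have hpre : {x : Fin (n + 1) → ℝ | eval x p = 0} =
        MeasurableEquiv.piFinSuccAbove (fun _ => ℝ) 0 ⁻¹' T := by
      ext x
      simp [T, MeasurableEquiv.piFinSuccAbove_apply, Fin.cons_self_tail]
    rw [hpre, (volume_preserving_piFinSuccAbove (fun _ => ℝ) 0).measure_preimage
      hT.nullMeasurableSet, Measure.volume_eq_prod, Measure.measure_prod_null hT]
    filter_upwards [measure_eq_zero_iff_ae_notMem.1 (hroots.measure_zero volume)] with y hy
    simpa [T, hcons] using ih hy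

def Module.polynomialFunctions (K E : Type*) [Field K] [AddCommGroup E] [Module K E] :
    Subalgebra K (E → K) :=
  Algebra.adjoin K (Set.range fun φ : Module.Dual K E => ⇑φ)

namespace Module.polynomialFunctions

section Field

variable {K E : Type*} [Field K] [AddCommGroup E] [Module K E]

theorem dual_mem (φ : Module.Dual K E) : ⇑φ ∈ polynomialFunctions K E :=
  Algebra.subset_adjoin ⟨φ, rfl⟩

theorem sum_mem_fun {ι : Type*} (s : Finset ι) {F : ι → E → K}
    (h : ∀ i ∈ s, F i ∈ polynomialFunctions K E) :
    (fun x => ∑ i ∈ s, F i x) ∈ polynomialFunctions K E :=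
  Finset.sum_fn s F ▸ sum_mem h

theorem prod_mem_fun {ι : Type*} (s : Finset ι) {F : ι → E → K}
    (h : ∀ i ∈ s, F i ∈ polynomialFunctions K E) :
    (fun x => ∏ i ∈ s, F i x) ∈ polynomialFunctions K E :=
  Finset.prod_fn s F ▸ prod_mem h

theorem det_submatrix_mem {m n : Type*} {A : E → Matrix m n K}
    (hA : ∀ i j, (fun x => A x i j) ∈ polynomialFunctions K E)
    {k : ℕ} (u : Fin k → m) (v : Fin k → n) :
    (fun x => ((A x).submatrix u v).det) ∈ polynomialFunctions K E := by
  simp only [Matrix.det_apply, Matrix.submatrix_apply]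
  exact sum_mem_fun _ fun σ _ => zsmul_mem (prod_mem_fun _ fun i _ => hA _ _) _

theorem exists_mvPolynomial {ι : Type*} [Fintype ι] (b : Basis ι K E) {f : E → K}
    (hf : f ∈ polynomialFunctions K E) :
    ∃ p : MvPolynomial ι K, ∀ x, f x = MvPolynomial.eval (b.equivFun x) p := by
  suffices polynomialFunctions K E ≤
      (MvPolynomial.aeval fun i (x : E) => b.equivFun x i).range by
    obtain ⟨p, rfl⟩ := this hf
    refine ⟨p, fun x => ?_⟩
    rw [← MvPolynomial.coe_aeval_eq_eval]
    exact MvPolynomial.comp_aeval_apply _ (Pi.evalAlgHom K (fun _ => K) x) p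
  refine Algebra.adjoin_le ?_
  rintro _ ⟨φ, rfl⟩
  refine ⟨∑ i, MvPolynomial.C (φ (b i)) * MvPolynomial.X i, ?_⟩
  ext x
  simp only [Basis.equivFun_apply, AlgHom.toRingHom_eq_coe, mul_comm, map_sum, RingHom.coe_coe,
    map_mul, MvPolynomial.aeval_X, MvPolynomial.algHom_C, Finset.sum_apply, Pi.mul_apply,
    Pi.algebraMap_apply, Algebra.algebraMap_self, RingHom.id_apply]
  conv_rhs => rw [← b.sum_repr x]
  simp only [map_sum, map_smul, smul_eq_mul]

end Field

variable {E : Type*} [NormedAddCommGroup E] [NormedSpace ℝ E] [FiniteDimensional ℝ E]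
  [MeasurableSpace E] [BorelSpace E] (μ : Measure E) [μ.IsAddHaarMeasure]

theorem addHaar_setOf_eq_zero {f : E → ℝ} (hf : f ∈ polynomialFunctions ℝ E)
    (hf0 : f ≠ 0) : μ {x | f x = 0} = 0 := by
  obtain ⟨p, hp⟩ := exists_mvPolynomial (Module.finBasis ℝ E) hf
  have hp0 : p ≠ 0 := by
    rintro rfl
    exact hf0 (funext fun x => by simp [hp])
  let e := (Module.finBasis ℝ E).equivFun.toContinuousLinearEquiv
  let Z := {y | MvPolynomial.eval y p = 0}
  have hpre : {x | f x = 0} = e ⁻¹' Z := by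
    ext x
    simp [hp, e, Z]
  have hmap : μ (e ⁻¹' Z) = μ.map e Z :=
    (e.toHomeomorph.toMeasurableEquiv.map_apply Z).symm
  have := e.isAddHaarMeasure_map μ
  rw [hpre, hmap]
  exact Measure.absolutelyContinuous_isAddHaarMeasure _ volume
    (MvPolynomial.volume_setOf_eval_eq_zero hp0)

theorem addHaar_setOf_rank_lt {m n : Type*} [Fintype m] [Fintype n] {A : E → Matrix m n ℝ}
    (hA : ∀ i j, (fun x => A x i j) ∈ polynomialFunctions ℝ E) (x₀ : E) :
    μ {x | (A x).rank < (A x₀).rank} = 0 := by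
  obtain ⟨u, v, huv⟩ := (A x₀).exists_submatrix_det_ne_zero
  refine measure_mono_null (fun x hx => ?_)
    (addHaar_setOf_eq_zero μ (det_submatrix_mem hA u v) fun h => huv (congrFun h x₀))
  by_contra hne
  exact (Matrix.le_rank_of_submatrix_det_ne_zero _ u v hne).not_gt hx

end Module.polynomialFunctions

-- Instance search does not find these through the nested `Pi` and `Prod` types.
instance (ι κ : Type*) [Fintype ι] [Fintype κ] :
    (volume : Measure (ι → κ → ℝ)).IsAddHaarMeasure :=
  Measure.instIsAddHaarMeasureForallVolumeOfMeasurableAddOfSigmaFinite (G := fun _ => κ → ℝ)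

instance (L M : ℕ) (r : ℕ → ℕ) :
    (volume : Measure (WeightSpace L M r)).IsAddHaarMeasure := by
  have : Measure.IsAddHaarMeasure
      (volume : Measure ((l : Fin (L - 1)) → Fin (r (l + 1)) → Fin (r l) → ℝ)) :=
    Measure.instIsAddHaarMeasureForallVolumeOfMeasurableAddOfSigmaFinite
  have : (volume : Measure (((l : Fin (L - 1)) → Fin (r (l + 1)) → Fin (r l) → ℝ) ×
      (Fin (r (L - 1)) → ℝ))).IsAddHaarMeasure :=
    Measure.prod.instIsAddHaarMeasure _ _
  exact Measure.prod.instIsAddHaarMeasure _ _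

open Module.polynomialFunctions

section DeepNetwork

variable {L M : ℕ} {r : ℕ → ℕ}

theorem phi_mem_polynomialFunctions (l : ℕ) (α : Fin (r l)) (d : Fin (4 ^ l) → Fin M) :
    (fun w : WeightSpace L M r => phi M r w.1 (extendMid L r w.2.1) l α d)
      ∈ Module.polynomialFunctions ℝ (WeightSpace L M r) := by
  induction l with
  | zero =>
    exact dual_mem (LinearMap.proj (d 0) ∘ₗ LinearMap.proj α ∘ₗ
      (LinearMap.fst ℝ _ _ : WeightSpace L M r →ₗ[ℝ] _))
  | succ l ih =>
    simp only [phi, castT, tpow4]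
    refine sum_mem_fun _ fun β _ => mul_mem ?_ (prod_mem_fun _ fun t _ => ih β _)
    by_cases h : l < L - 1
    · simp only [extendMid, h, ↓reduceDIte]
      exact dual_mem (LinearMap.proj β ∘ₗ LinearMap.proj α ∘ₗ
        LinearMap.proj (⟨l, h⟩ : Fin (L - 1)) ∘ₗ LinearMap.fst ℝ _ _ ∘ₗ
        (LinearMap.snd ℝ _ _ : WeightSpace L M r →ₗ[ℝ] _))
    · simp only [extendMid, h, ↓reduceDIte]
      exact zero_mem _

theorem deepAw_apply_mem_polynomialFunctions (hL : 1 ≤ L) (d : Fin (4 ^ L) → Fin M) :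
    (fun w : WeightSpace L M r => deepAw L M hL r w d)
      ∈ Module.polynomialFunctions ℝ (WeightSpace L M r) := by
  simp only [deepAw, deepA, castT, tpow4]
  refine sum_mem_fun _ fun β _ =>
    mul_mem ?_ (prod_mem_fun _ fun _ _ => phi_mem_polynomialFunctions _ β _)
  exact dual_mem (LinearMap.proj β ∘ₗ LinearMap.snd ℝ _ _ ∘ₗ
    (LinearMap.snd ℝ _ _ : WeightSpace L M r →ₗ[ℝ] _))

end DeepNetwork

theorem stmt4_general (L M : ℕ) (hL : 1 ≤ L) (r : ℕ → ℕ)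
    (I J : Finset (Fin (4 ^ L))) (hU : I ∪ J = Finset.univ)
    (rmax : ℕ)
    (hmax : IsGreatest {ρ : ℕ | ∃ w : WeightSpace L M r,
        (matricize (deepAw L M hL r w) I J hU).rank = ρ} rmax) :
    volume {w : WeightSpace L M r |
        (matricize (deepAw L M hL r w) I J hU).rank < rmax} = 0 := by
  obtain ⟨w₀, rfl⟩ := hmax.1
  have hA : ∀ u v, (fun w => matricize (deepAw L M hL r w) I J hU u v) ∈
      Module.polynomialFunctions ℝ (WeightSpace L M r) := fun u v => by
    simp only [matricize, Matrix.of_apply]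
    exact deepAw_apply_mem_polynomialFunctions hL _
  exact addHaar_setOf_rank_lt volume hA w₀

theorem stmt4 (L M : ℕ) (hL : 1 ≤ L) (hM : 1 ≤ M) (r : ℕ → ℕ)
    (hr : ∀ l, l < L → 1 ≤ r l)
    (I J : Finset (Fin (4 ^ L))) (hdisj : Disjoint I J) (hU : I ∪ J = Finset.univ)
    (rmax : ℕ)
    (hmax : IsGreatest {ρ : ℕ | ∃ w : WeightSpace L M r,
        (matricize (deepAw L M hL r w) I J hU).rank = ρ} rmax) :
    volume {w : WeightSpace L M r |
        (matricize (deepAw L M hL r w) I J hU).rank < rmax} = 0 :=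
  stmt4_general L M hL r I J hU rmax hmax
end
end

section
/- Let f₁,…,f_M : (Fin s → ℝ) → ℝ be measurable, square-integrable functions, and let h be the function realized with coefficient tensor A, where A admits a CP (rank-1) decomposition with r₀ terms: A(d) = Σ_{γ=1}^{r₀} a_γ · ∏_{i : Fin N} v_γ(d(i)) with a_γ ∈ ℝ, v_γ ∈ ℝ^M (this is the function realized by a shallow convolutional arithmetic circuit with r₀ hidden channels). Then for every partition of Fin N into disjoint subsets I and J with I ∪ J = univ, the separation rank satisfies sep(h; I, J) ≤ min{ M^{min(|I|,|J|)}, r₀ }; in particular it is at most linear in the network width r₀. -/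
/-!
Expanding the coefficient tensor along the partition writes `h` as
`∑_{u,w} A(u, w) · Φ_u(x_I) · Ψ_w(x_J)`, where `Φ_u`, `Ψ_w` are products of the `f`'s over the
`M ^ |I|`, resp. `M ^ |J|`, index assignments of the two sides; summing over `w` first, or over `u`
first, gives separable decompositions of either length. For a CP tensor the sum over `d` factors
through the coordinates, `h(x) = ∑_γ a_γ ∏_i φ_γ(x_i)` with `φ_γ = ∑_m v_γ(m) f_m`, and splitting
each product along `I ∪ J` gives a decomposition with `r₀` terms.
-/

open MeasureTheory

noncomputable section

/-- The function realized with coefficient tensor `A` and representation functions `f`. -/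
def realized {N M s : ℕ} (f : Fin M → (Fin s → ℝ) → ℝ)
    (A : (Fin N → Fin M) → ℝ) : (Fin N → (Fin s → ℝ)) → ℝ :=
  fun x => ∑ d : Fin N → Fin M, A d * ∏ i, f (d i) (x i)

/-- Separation rank of `h` with respect to the partition `(I, J)`. -/
def sepRank {N s : ℕ} (I J : Finset (Fin N))
    (h : (Fin N → (Fin s → ℝ)) → ℝ) : ℕ :=
  sInf {R : ℕ |
    ∃ (g : Fin R → ({n // n ∈ I} → (Fin s → ℝ)) → ℝ)
      (g' : Fin R → ({n // n ∈ J} → (Fin s → ℝ)) → ℝ),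
      (∀ ν, Measurable (g ν)) ∧ (∀ ν, MemLp (g ν) 2 volume) ∧
      (∀ ν, Measurable (g' ν)) ∧ (∀ ν, MemLp (g' ν) 2 volume) ∧
      ∀ x : Fin N → (Fin s → ℝ),
        h x = ∑ ν, g ν (fun n => x n.1) * g' ν (fun n => x n.1)}

theorem MeasureTheory.MemLp.fintype_prod_two {ι E : Type*} [Fintype ι] [MeasurableSpace E]
    {μ : Measure E} [SigmaFinite μ] {F : ι → E → ℝ} (hFm : ∀ i, Measurable (F i))
    (hF : ∀ i, MemLp (F i) 2 μ) :
    MemLp (fun y : ι → E => ∏ i, F i (y i)) 2 (Measure.pi fun _ => μ) := by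
  rw [memLp_two_iff_integrable_sq (by fun_prop : Measurable _).aestronglyMeasurable]
  simp_rw [← Finset.prod_pow]
  exact Integrable.fintype_prod fun i =>
    (memLp_two_iff_integrable_sq (hFm i).aestronglyMeasurable).1 (hF i)

section SeparationRank

variable {N s : ℕ} {I J : Finset (Fin N)} {h : (Fin N → (Fin s → ℝ)) → ℝ}

theorem sepRank_le_card {κ : Type*} [Fintype κ]
    (g : κ → ({n // n ∈ I} → (Fin s → ℝ)) → ℝ) (g' : κ → ({n // n ∈ J} → (Fin s → ℝ)) → ℝ)
    (hgm : ∀ ν, Measurable (g ν)) (hg : ∀ ν, MemLp (g ν) 2 volume)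
    (hg'm : ∀ ν, Measurable (g' ν)) (hg' : ∀ ν, MemLp (g' ν) 2 volume)
    (heq : ∀ x, h x = ∑ ν, g ν (fun n => x n.1) * g' ν (fun n => x n.1)) :
    sepRank I J h ≤ Fintype.card κ := by
  let e := (Fintype.equivFin κ).symm
  refine Nat.sInf_le ⟨g ∘ e, g' ∘ e, fun ν => hgm _, fun ν => hg _, fun ν => hg'm _,
    fun ν => hg' _, fun x => ?_⟩
  rw [heq x]
  exact (e.sum_comp fun ν => g ν (fun n => x n.1) * g' ν (fun n => x n.1)).symm

variable {κ ι : Type*} [Fintype κ] [Fintype ι] (c : κ → ι → ℝ)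
  {g : κ → ({n // n ∈ I} → (Fin s → ℝ)) → ℝ} {g' : ι → ({n // n ∈ J} → (Fin s → ℝ)) → ℝ}

theorem sepRank_le_card_left_of_bilinear
    (hgm : ∀ ν, Measurable (g ν)) (hg : ∀ ν, MemLp (g ν) 2 volume)
    (hg'm : ∀ μ, Measurable (g' μ)) (hg' : ∀ μ, MemLp (g' μ) 2 volume)
    (heq : ∀ x, h x = ∑ ν, ∑ μ, c ν μ * g ν (fun n => x n.1) * g' μ (fun n => x n.1)) :
    sepRank I J h ≤ Fintype.card κ := by
  refine sepRank_le_card g (fun ν z => ∑ μ, c ν μ * g' μ z) hgm hg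
    (fun ν => by fun_prop) (fun ν => memLp_finsetSum _ fun μ _ => (hg' μ).const_mul _)
    fun x => ?_
  simp only [heq x, Finset.mul_sum]
  exact Finset.sum_congr rfl fun ν _ => Finset.sum_congr rfl fun μ _ => by ring

theorem sepRank_le_card_right_of_bilinear
    (hgm : ∀ ν, Measurable (g ν)) (hg : ∀ ν, MemLp (g ν) 2 volume)
    (hg'm : ∀ μ, Measurable (g' μ)) (hg' : ∀ μ, MemLp (g' μ) 2 volume)
    (heq : ∀ x, h x = ∑ ν, ∑ μ, c ν μ * g ν (fun n => x n.1) * g' μ (fun n => x n.1)) :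
    sepRank I J h ≤ Fintype.card ι := by
  refine sepRank_le_card (fun μ y => ∑ ν, c ν μ * g ν y) g'
    (fun μ => by fun_prop) (fun μ => memLp_finsetSum _ fun ν _ => (hg ν).const_mul _)
    hg'm hg' fun x => ?_
  simp only [heq x, Finset.sum_mul]
  exact Finset.sum_comm

end SeparationRank

section Partition

variable {N M : ℕ} {I J : Finset (Fin N)}

theorem prod_eq_prod_mul_prod_of_partition {β : Type*} [CommMonoid β] (hdisj : Disjoint I J)
    (hU : I ∪ J = Finset.univ) (G : Fin N → β) :
    ∏ i, G i = (∏ n : {n // n ∈ I}, G n) * ∏ n : {n // n ∈ J}, G n := by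
  rw [Finset.prod_coe_sort, Finset.prod_coe_sort, ← Finset.prod_union hdisj, hU]

def glue (hU : I ∪ J = Finset.univ) (u : {n // n ∈ I} → Fin M) (w : {n // n ∈ J} → Fin M) :
    Fin N → Fin M :=
  fun n => if h : n ∈ I then u ⟨n, h⟩ else w ⟨n, by
    have hn : n ∈ I ∪ J := hU ▸ Finset.mem_univ n
    exact (Finset.mem_union.mp hn).resolve_left h⟩

theorem matricize_apply_eq_glue (A : (Fin N → Fin M) → ℝ) (hU : I ∪ J = Finset.univ)
    (u : {n // n ∈ I} → Fin M) (w : {n // n ∈ J} → Fin M) :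
    matricize A I J hU u w = A (glue hU u w) := rfl

variable {hU : I ∪ J = Finset.univ} {u : {n // n ∈ I} → Fin M} {w : {n // n ∈ J} → Fin M}

@[simp]
theorem glue_apply_left (n : {n // n ∈ I}) : glue hU u w n = u n :=
  dif_pos n.2

@[simp]
theorem glue_apply_right (hdisj : Disjoint I J) (n : {n // n ∈ J}) : glue hU u w n = w n :=
  dif_neg (Finset.disjoint_right.mp hdisj n.2)

def partitionEquiv (hdisj : Disjoint I J) (hU : I ∪ J = Finset.univ) :
    (Fin N → Fin M) ≃ ({n // n ∈ I} → Fin M) × ({n // n ∈ J} → Fin M) where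
  toFun d := (fun n => d n, fun n => d n)
  invFun p := glue hU p.1 p.2
  left_inv d := by
    funext n
    simp only [glue]
    split <;> rfl
  right_inv p := by ext n <;> simp [glue_apply_right hdisj]

theorem realized_eq_sum_matricize {s : ℕ} (f : Fin M → (Fin s → ℝ) → ℝ)
    (A : (Fin N → Fin M) → ℝ) (hdisj : Disjoint I J) (hU : I ∪ J = Finset.univ)
    (x : Fin N → (Fin s → ℝ)) :
    realized f A x = ∑ u : {n // n ∈ I} → Fin M, ∑ w : {n // n ∈ J} → Fin M,
      matricize A I J hU u w * (∏ n, f (u n) (x n)) * ∏ n, f (w n) (x n) := by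
  rw [realized, ← (partitionEquiv hdisj hU).symm.sum_comp, Fintype.sum_prod_type]
  refine Finset.sum_congr rfl fun u _ => Finset.sum_congr rfl fun w _ => ?_
  rw [prod_eq_prod_mul_prod_of_partition hdisj hU, mul_assoc]
  simp [partitionEquiv, matricize_apply_eq_glue, glue_apply_right hdisj]

end Partition

theorem realized_eq_sum_prod_of_cp {N M s r : ℕ} (f : Fin M → (Fin s → ℝ) → ℝ)
    (a : Fin r → ℝ) (v : Fin r → Fin M → ℝ) (A : (Fin N → Fin M) → ℝ)
    (hA : ∀ d, A d = ∑ γ, a γ * ∏ i, v γ (d i)) (x : Fin N → (Fin s → ℝ)) :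
    realized f A x = ∑ γ, a γ * ∏ i, ∑ m, v γ m * f m (x i) := by
  simp_rw [Finset.prod_univ_sum, Fintype.piFinset_univ, Finset.mul_sum, realized, hA,
    Finset.sum_mul, mul_assoc, ← Finset.prod_mul_distrib]
  exact Finset.sum_comm

section Realized

variable {N M s : ℕ} {f : Fin M → (Fin s → ℝ) → ℝ} (hfm : ∀ d, Measurable (f d))
  (hfL2 : ∀ d, MemLp (f d) 2 volume) (A : (Fin N → Fin M) → ℝ) {I J : Finset (Fin N)}
  (hdisj : Disjoint I J) (hU : I ∪ J = Finset.univ)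
include hfm hfL2 hdisj hU

theorem sepRank_realized_le_pow_card_left : sepRank I J (realized f A) ≤ M ^ I.card := by
  simpa using sepRank_le_card_left_of_bilinear _ (fun u => by fun_prop)
    (fun u => MemLp.fintype_prod_two (fun n => hfm _) fun n => hfL2 _) (fun w => by fun_prop)
    (fun w => MemLp.fintype_prod_two (fun n => hfm _) fun n => hfL2 _)
    (realized_eq_sum_matricize f A hdisj hU)

theorem sepRank_realized_le_pow_card_right : sepRank I J (realized f A) ≤ M ^ J.card := by
  simpa using sepRank_le_card_right_of_bilinear _ (fun u => by fun_prop)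
    (fun u => MemLp.fintype_prod_two (fun n => hfm _) fun n => hfL2 _) (fun w => by fun_prop)
    (fun w => MemLp.fintype_prod_two (fun n => hfm _) fun n => hfL2 _)
    (realized_eq_sum_matricize f A hdisj hU)

theorem sepRank_realized_le_pow_min :
    sepRank I J (realized f A) ≤ M ^ min I.card J.card := by
  rcases le_total I.card J.card with hle | hle
  · simpa [min_eq_left hle] using sepRank_realized_le_pow_card_left hfm hfL2 A hdisj hU
  · simpa [min_eq_right hle] using sepRank_realized_le_pow_card_right hfm hfL2 A hdisj hU

theorem sepRank_realized_le_of_cp {r : ℕ} (a : Fin r → ℝ) (v : Fin r → Fin M → ℝ)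
    (hA : ∀ d, A d = ∑ γ, a γ * ∏ i, v γ (d i)) : sepRank I J (realized f A) ≤ r := by
  set φ : Fin r → (Fin s → ℝ) → ℝ := fun γ z => ∑ m, v γ m * f m z
  have hφ (γ : Fin r) : MemLp (φ γ) 2 volume :=
    memLp_finsetSum _ fun m _ => (hfL2 m).const_mul _
  simpa using sepRank_le_card (fun γ y => a γ * ∏ n : {n // n ∈ I}, φ γ (y n))
    (fun γ z => ∏ n : {n // n ∈ J}, φ γ (z n)) (fun γ => by fun_prop)
    (fun γ => (MemLp.fintype_prod_two (fun n => by fun_prop) fun n => hφ γ).const_mul _)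
    (fun γ => by fun_prop) (fun γ => MemLp.fintype_prod_two (fun n => by fun_prop) fun n => hφ γ)
    fun x => by
      simp only [realized_eq_sum_prod_of_cp f a v A hA x,
        prod_eq_prod_mul_prod_of_partition hdisj hU, mul_assoc, φ]

end Realized

theorem stmt8 (N M s r0 : ℕ) (f : Fin M → (Fin s → ℝ) → ℝ)
    (hfm : ∀ d, Measurable (f d)) (hfL2 : ∀ d, MemLp (f d) 2 volume)
    (a : Fin r0 → ℝ) (v : Fin r0 → Fin M → ℝ)
    (A : (Fin N → Fin M) → ℝ)
    (hA : ∀ d : Fin N → Fin M, A d = ∑ γ, a γ * ∏ i, v γ (d i))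
    (I J : Finset (Fin N)) (hdisj : Disjoint I J) (hU : I ∪ J = Finset.univ) :
    sepRank I J (realized f A) ≤ min (M ^ min I.card J.card) r0 :=
  le_min (sepRank_realized_le_pow_min hfm hfL2 A hdisj hU)
    (sepRank_realized_le_of_cp hfm hfL2 A hdisj hU a v hA)
end
end

section
/- Let {φ_μ}_{μ=1}^m be an orthonormal family in L²(ℝ^p) and {φ'_{μ'}}_{μ'=1}^{m'} an orthonormal family in L²(ℝ^q), let A be a nonzero real m-by-m' matrix, and define h(x,y) = Σ_{μ,μ'} A_{μ,μ'} · φ_μ(x) · φ'_{μ'}(y). Then the infimum over all g ∈ L²(ℝ^p) and g' ∈ L²(ℝ^q) of ∫ (h(x,y) − g(x)·g'(y))² dx dy equals ‖A‖_F² − ‖A‖²_{op}, where ‖A‖_{op} is the ℓ²→ℓ² operator norm of A (its largest singular value). Consequently, the normalized L² distance of h from the set of separable functions equals √(1 − ‖A‖²_{op}/‖A‖_F²). -/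
open MeasureTheory

/-- The ℓ²→ℓ² operator norm (largest singular value) of a real matrix. -/
noncomputable def l2OpNorm {m m' : ℕ} (A : Matrix (Fin m) (Fin m') ℝ) : ℝ :=
  ‖LinearMap.toContinuousLinearMap (Matrix.toEuclideanLin A)‖

/-!
Write `b` and `c` for the coefficient vectors of `g` and `g'` along the two orthonormal families.
Expanding the square, `∫ (h - g ⊗ g')² = ‖A‖_F² - 2 bᵀAc + ‖g‖²‖g'‖²`. Bessel's inequality gives
`‖b‖ ≤ ‖g‖` and `‖c‖ ≤ ‖g'‖`, and `bᵀAc ≤ ‖A‖_op ‖b‖ ‖c‖`; so with `t = ‖b‖ ‖c‖` the error is at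
least `‖A‖_F² - 2 ‖A‖_op t + t² ≥ ‖A‖_F² - ‖A‖_op²`. In finite dimension the operator norm is
attained at some `c` with `‖c‖ ≤ 1`, and `g = ∑ (Ac)_μ φ_μ`, `g' = ∑ c_ν φ'_ν` reach the bound.
The normalized statement follows since `∫ h² = ‖A‖_F² > 0`.
-/

open Matrix

theorem ContinuousLinearMap.exists_norm_le_one_norm_apply_eq_opNorm {E F : Type*}
    [NormedAddCommGroup E] [NormedSpace ℝ E] [FiniteDimensional ℝ E]
    [NormedAddCommGroup F] [NormedSpace ℝ F] (f : E →L[ℝ] F) :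
    ∃ x, ‖x‖ ≤ 1 ∧ ‖f x‖ = ‖f‖ := by
  have hK : IsCompact ((fun x => ‖f x‖) '' Metric.closedBall 0 1) :=
    (isCompact_closedBall 0 1).image (by fun_prop)
  obtain ⟨x, hx, hfx⟩ := hK.sSup_mem ((Metric.nonempty_closedBall.2 zero_le_one).image _)
  exact ⟨x, mem_closedBall_zero_iff.1 hx, hfx.trans f.sSup_unitClosedBall_eq_norm⟩

lemma EuclideanSpace.real_norm_toLp {n : Type*} [Fintype n] (v : n → ℝ) :
    ‖WithLp.toLp 2 v‖ = √(∑ i, v i ^ 2) := by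
  simp [EuclideanSpace.norm_eq]

lemma Matrix.sum_sum_sq_pos {ι κ : Type*} [Fintype ι] [Fintype κ] {A : Matrix ι κ ℝ}
    (hA : A ≠ 0) : 0 < ∑ i, ∑ j, A i j ^ 2 := by
  obtain ⟨i, j, hij⟩ : ∃ i j, A i j ≠ 0 := by
    by_contra! h
    exact hA (Matrix.ext h)
  exact Finset.sum_pos' (fun _ _ => by positivity) ⟨i, Finset.mem_univ _,
    Finset.sum_pos' (fun _ _ => by positivity) ⟨j, Finset.mem_univ _, by positivity⟩⟩

section l2OpNorm

variable {m m' : ℕ} (A : Matrix (Fin m) (Fin m') ℝ)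

lemma dotProduct_mulVec_le_l2OpNorm (b : Fin m → ℝ) (c : Fin m' → ℝ) :
    b ⬝ᵥ A *ᵥ c ≤ l2OpNorm A * √(∑ i, b i ^ 2) * √(∑ j, c j ^ 2) := by
  set T := LinearMap.toContinuousLinearMap (Matrix.toEuclideanLin A)
  have hinner : b ⬝ᵥ A *ᵥ c = inner ℝ (WithLp.toLp 2 b) (T (WithLp.toLp 2 c)) := by
    simp [T, EuclideanSpace.inner_eq_star_dotProduct, dotProduct_comm]
  calc b ⬝ᵥ A *ᵥ c ≤ ‖WithLp.toLp 2 b‖ * ‖T (WithLp.toLp 2 c)‖ :=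
        hinner ▸ real_inner_le_norm _ _
    _ ≤ ‖WithLp.toLp 2 b‖ * (‖T‖ * ‖WithLp.toLp 2 c‖) := by gcongr; exact T.le_opNorm _
    _ = _ := by
      rw [EuclideanSpace.real_norm_toLp, EuclideanSpace.real_norm_toLp, l2OpNorm]
      ring

lemma exists_sum_sq_le_one_sum_sq_mulVec_eq_l2OpNorm_sq :
    ∃ c : Fin m' → ℝ, ∑ j, c j ^ 2 ≤ 1 ∧ ∑ i, (A *ᵥ c) i ^ 2 = l2OpNorm A ^ 2 := by
  obtain ⟨x, hx, hTx⟩ := (LinearMap.toContinuousLinearMap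
    (Matrix.toEuclideanLin A)).exists_norm_le_one_norm_apply_eq_opNorm
  refine ⟨x.ofLp, ?_, ?_⟩
  · rw [← EuclideanSpace.real_norm_sq_eq]
    exact pow_le_one₀ (norm_nonneg _) hx
  · rw [l2OpNorm, ← hTx, EuclideanSpace.real_norm_sq_eq]
    simp

end l2OpNorm

section L2

variable {α : Type*} [MeasurableSpace α] {μ : Measure α}

lemma integral_sub_sq {f g : α → ℝ} (hf : MemLp f 2 μ) (hg : MemLp g 2 μ) :
    ∫ x, (f x - g x) ^ 2 ∂μ = ∫ x, f x ^ 2 ∂μ - 2 * ∫ x, f x * g x ∂μ + ∫ x, g x ^ 2 ∂μ := by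
  have hfg : Integrable (fun x => 2 * (f x * g x)) μ := (hf.integrable_mul hg).const_mul 2
  simp_rw [sub_sq, mul_assoc]
  rw [integral_add (f := fun x => f x ^ 2 - 2 * (f x * g x)) (hf.integrable_sq.sub hfg)
      hg.integrable_sq, integral_sub hf.integrable_sq hfg, integral_const_mul]

lemma memLp_sum_mul {ι : Type*} [Fintype ι] {φ : ι → α → ℝ} {p : ENNReal}
    (hφ : ∀ i, MemLp (φ i) p μ) (b : ι → ℝ) : MemLp (fun x => ∑ i, b i * φ i x) p μ :=
  memLp_finsetSum Finset.univ fun i _ => (hφ i).const_mul (b i)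

lemma integral_sum_mul_mul {ι : Type*} [Fintype ι] {φ : ι → α → ℝ}
    (hφ : ∀ i, MemLp (φ i) 2 μ) (b : ι → ℝ) {f : α → ℝ} (hf : MemLp f 2 μ) :
    ∫ x, (∑ i, b i * φ i x) * f x ∂μ = ∑ i, b i * ∫ x, φ i x * f x ∂μ := by
  simp_rw [Finset.sum_mul, mul_assoc]
  rw [integral_finsetSum (f := fun i x => b i * (φ i x * f x)) _ fun i _ =>
    ((hφ i).integrable_mul hf).const_mul (b i)]
  simp_rw [integral_const_mul]

structure L2Orthonormal {ι : Type*} [DecidableEq ι] (μ : Measure α) (φ : ι → α → ℝ) :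
    Prop where
  memLp : ∀ i, MemLp (φ i) 2 μ
  integral_mul : ∀ i j, ∫ x, φ i x * φ j x ∂μ = if i = j then 1 else 0

namespace L2Orthonormal

variable {ι : Type*} [Fintype ι] [DecidableEq ι] {φ : ι → α → ℝ}

lemma integral_mul_sum_mul (hφ : L2Orthonormal μ φ) (b : ι → ℝ) (j : ι) :
    ∫ x, φ j x * ∑ i, b i * φ i x ∂μ = b j := by
  simp_rw [mul_comm (φ j _)]
  simp [integral_sum_mul_mul hφ.memLp b (hφ.memLp j), hφ.integral_mul]

lemma integral_sum_sq (hφ : L2Orthonormal μ φ) (b : ι → ℝ) :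
    ∫ x, (∑ i, b i * φ i x) ^ 2 ∂μ = ∑ i, b i ^ 2 := by
  simp_rw [sq, integral_sum_mul_mul hφ.memLp b (memLp_sum_mul hφ.memLp b),
    hφ.integral_mul_sum_mul]

lemma integral_sum_sub_sq (hφ : L2Orthonormal μ φ) (b : ι → ℝ) {f : α → ℝ}
    (hf : MemLp f 2 μ) :
    ∫ x, (∑ i, b i * φ i x - f x) ^ 2 ∂μ =
      ∑ i, b i ^ 2 - 2 * ∑ i, b i * ∫ x, φ i x * f x ∂μ + ∫ x, f x ^ 2 ∂μ := by
  rw [integral_sub_sq (memLp_sum_mul hφ.memLp b) hf, hφ.integral_sum_sq,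
    integral_sum_mul_mul hφ.memLp b hf]

lemma sum_sq_integral_mul_le (hφ : L2Orthonormal μ φ) {f : α → ℝ} (hf : MemLp f 2 μ) :
    ∑ i, (∫ x, φ i x * f x ∂μ) ^ 2 ≤ ∫ x, f x ^ 2 ∂μ := by
  have h := hφ.integral_sum_sub_sq (fun i => ∫ x, φ i x * f x ∂μ) hf
  simp_rw [← sq] at h
  linarith [integral_nonneg (μ := μ)
    (f := fun x => (∑ i, (∫ x, φ i x * f x ∂μ) * φ i x - f x) ^ 2) fun x => sq_nonneg _]

end L2Orthonormal

variable {β : Type*} [MeasurableSpace β] {ν : Measure β}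

lemma memLp_two_mul_prod {f : α → ℝ} {g : β → ℝ} (hf : MemLp f 2 μ) (hg : MemLp g 2 ν) :
    MemLp (fun z : α × β => f z.1 * g z.2) 2 (μ.prod ν) := by
  refine (memLp_two_iff_integrable_sq (f := fun z : α × β => f z.1 * g z.2)
    (hf.1.comp_fst.mul hg.1.comp_snd)).2 ?_
  simpa only [mul_pow] using hf.integrable_sq.mul_prod hg.integrable_sq

lemma L2Orthonormal.prod [SFinite μ] [SFinite ν] {ι κ : Type*} [DecidableEq ι] [DecidableEq κ]
    {φ : ι → α → ℝ} {ψ : κ → β → ℝ} (hφ : L2Orthonormal μ φ) (hψ : L2Orthonormal ν ψ) :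
    L2Orthonormal (μ.prod ν) fun (k : ι × κ) (z : α × β) => φ k.1 z.1 * ψ k.2 z.2 where
  memLp k := memLp_two_mul_prod (hφ.memLp k.1) (hψ.memLp k.2)
  integral_mul k l := by
    simp_rw [mul_mul_mul_comm (φ k.1 _)]
    rw [integral_prod_mul (fun x => φ k.1 x * φ l.1 x) (fun y => ψ k.2 y * ψ l.2 y),
      hφ.integral_mul, hψ.integral_mul]
    by_cases k.1 = l.1 <;> simp [Prod.ext_iff, *]

end L2

noncomputable def tensorSum {α β : Type*} {m m' : ℕ} (A : Matrix (Fin m) (Fin m') ℝ)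
    (φ : Fin m → α → ℝ) (ψ : Fin m' → β → ℝ) (z : α × β) : ℝ :=
  ∑ i, ∑ j, A i j * (φ i z.1 * ψ j z.2)

lemma tensorSum_eq_sum_prod {α β : Type*} {m m' : ℕ} (A : Matrix (Fin m) (Fin m') ℝ)
    (φ : Fin m → α → ℝ) (ψ : Fin m' → β → ℝ) (z : α × β) :
    tensorSum A φ ψ z = ∑ k : Fin m × Fin m', A k.1 k.2 * (φ k.1 z.1 * ψ k.2 z.2) :=
  (Fintype.sum_prod_type fun k : Fin m × Fin m' => A k.1 k.2 * (φ k.1 z.1 * ψ k.2 z.2)).symm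

section Tensor

variable {α β : Type*} [MeasurableSpace α] [MeasurableSpace β] {μ : Measure α} {ν : Measure β}
  [SFinite μ] [SFinite ν] {m m' : ℕ} {φ : Fin m → α → ℝ} {ψ : Fin m' → β → ℝ}
  (A : Matrix (Fin m) (Fin m') ℝ)

lemma integral_tensorSum_sq (hφ : L2Orthonormal μ φ) (hψ : L2Orthonormal ν ψ) :
    ∫ z, tensorSum A φ ψ z ^ 2 ∂μ.prod ν = ∑ i, ∑ j, A i j ^ 2 := by
  simp_rw [tensorSum_eq_sum_prod]
  rw [(hφ.prod hψ).integral_sum_sq, Fintype.sum_prod_type]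

lemma integral_tensorSum_sub_mul_sq (hφ : L2Orthonormal μ φ) (hψ : L2Orthonormal ν ψ)
    {g : α → ℝ} {g' : β → ℝ} (hg : MemLp g 2 μ) (hg' : MemLp g' 2 ν) :
    ∫ z, (tensorSum A φ ψ z - g z.1 * g' z.2) ^ 2 ∂μ.prod ν =
      ∑ i, ∑ j, A i j ^ 2
        - 2 * ((fun i => ∫ x, φ i x * g x ∂μ) ⬝ᵥ A *ᵥ fun j => ∫ y, ψ j y * g' y ∂ν)
        + (∫ x, g x ^ 2 ∂μ) * ∫ y, g' y ^ 2 ∂ν := by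
  have hcoef (k : Fin m × Fin m') :
      ∫ z, φ k.1 z.1 * ψ k.2 z.2 * (g z.1 * g' z.2) ∂μ.prod ν =
        (∫ x, φ k.1 x * g x ∂μ) * ∫ y, ψ k.2 y * g' y ∂ν := by
    rw [← integral_prod_mul (fun x => φ k.1 x * g x) (fun y => ψ k.2 y * g' y)]
    exact integral_congr_ae (ae_of_all _ fun z => mul_mul_mul_comm _ _ _ _)
  simp_rw [tensorSum_eq_sum_prod]
  rw [(hφ.prod hψ).integral_sum_sub_sq _ (memLp_two_mul_prod hg hg')]
  simp_rw [hcoef, mul_pow, integral_prod_mul (fun x => g x ^ 2) (fun y => g' y ^ 2)]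
  simp [Fintype.sum_prod_type, dotProduct, mulVec, Finset.mul_sum, mul_left_comm]

lemma sum_sq_sub_l2OpNorm_sq_le (hφ : L2Orthonormal μ φ) (hψ : L2Orthonormal ν ψ)
    {g : α → ℝ} {g' : β → ℝ} (hg : MemLp g 2 μ) (hg' : MemLp g' 2 ν) :
    ∑ i, ∑ j, A i j ^ 2 - l2OpNorm A ^ 2 ≤
      ∫ z, (tensorSum A φ ψ z - g z.1 * g' z.2) ^ 2 ∂μ.prod ν := by
  rw [integral_tensorSum_sub_mul_sq A hφ hψ hg hg']
  set b := fun i => ∫ x, φ i x * g x ∂μ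
  set c := fun j => ∫ y, ψ j y * g' y ∂ν
  have hb : ∑ i, b i ^ 2 ≤ ∫ x, g x ^ 2 ∂μ := hφ.sum_sq_integral_mul_le hg
  have hc : ∑ j, c j ^ 2 ≤ ∫ y, g' y ^ 2 ∂ν := hψ.sum_sq_integral_mul_le hg'
  have hb0 : 0 ≤ ∑ i, b i ^ 2 := by positivity
  have hc0 : 0 ≤ ∑ j, c j ^ 2 := by positivity
  have hbc := dotProduct_mulVec_le_l2OpNorm A b c
  have hsq : (√(∑ i, b i ^ 2) * √(∑ j, c j ^ 2)) ^ 2 = (∑ i, b i ^ 2) * ∑ j, c j ^ 2 := by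
    rw [mul_pow, Real.sq_sqrt hb0, Real.sq_sqrt hc0]
  nlinarith [sq_nonneg (√(∑ i, b i ^ 2) * √(∑ j, c j ^ 2) - l2OpNorm A),
    mul_le_mul hb hc hc0 (hb0.trans hb)]

theorem isLeast_integral_tensorSum_sub_mul_sq (hφ : L2Orthonormal μ φ)
    (hψ : L2Orthonormal ν ψ) (hφm : ∀ i, Measurable (φ i)) (hψm : ∀ j, Measurable (ψ j)) :
    IsLeast {t : ℝ | ∃ (g : α → ℝ) (g' : β → ℝ),
        Measurable g ∧ MemLp g 2 μ ∧ Measurable g' ∧ MemLp g' 2 ν ∧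
        t = ∫ z, (tensorSum A φ ψ z - g z.1 * g' z.2) ^ 2 ∂μ.prod ν}
      (∑ i, ∑ j, A i j ^ 2 - l2OpNorm A ^ 2) := by
  obtain ⟨c, hc, hAc⟩ := exists_sum_sq_le_one_sum_sq_mulVec_eq_l2OpNorm_sq A
  have hg := memLp_sum_mul hφ.memLp (A *ᵥ c)
  have hg' := memLp_sum_mul hψ.memLp c
  refine ⟨⟨_, _, by fun_prop, hg, by fun_prop, hg',
    le_antisymm (sum_sq_sub_l2OpNorm_sq_le A hφ hψ hg hg') ?_⟩, ?_⟩
  · have hdot : (A *ᵥ c) ⬝ᵥ A *ᵥ c = l2OpNorm A ^ 2 := by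
      rw [← hAc]
      simp [dotProduct, sq]
    rw [integral_tensorSum_sub_mul_sq A hφ hψ hg hg']
    simp_rw [hφ.integral_mul_sum_mul, hψ.integral_mul_sum_mul, hφ.integral_sum_sq,
      hψ.integral_sum_sq, hAc, hdot]
    nlinarith
  · rintro _ ⟨g, g', -, hg, -, hg', rfl⟩
    exact sum_sq_sub_l2OpNorm_sq_le A hφ hψ hg hg'

end Tensor

theorem stmt14 (p q m m' : ℕ)
    (φ : Fin m → (Fin p → ℝ) → ℝ) (φ' : Fin m' → (Fin q → ℝ) → ℝ)
    (hφm : ∀ μ, Measurable (φ μ)) (hφ2 : ∀ μ, MemLp (φ μ) 2 volume)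
    (hφ'm : ∀ μ', Measurable (φ' μ')) (hφ'2 : ∀ μ', MemLp (φ' μ') 2 volume)
    (horth : ∀ μ ν : Fin m,
      ∫ x : Fin p → ℝ, φ μ x * φ ν x = if μ = ν then (1 : ℝ) else 0)
    (horth' : ∀ μ' ν' : Fin m',
      ∫ y : Fin q → ℝ, φ' μ' y * φ' ν' y = if μ' = ν' then (1 : ℝ) else 0)
    (A : Matrix (Fin m) (Fin m') ℝ) (hA : A ≠ 0)
    (h : (Fin p → ℝ) × (Fin q → ℝ) → ℝ)
    (hdef : ∀ (x : Fin p → ℝ) (y : Fin q → ℝ),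
      h (x, y) = ∑ μ, ∑ μ', A μ μ' * (φ μ x * φ' μ' y)) :
    IsGLB {t : ℝ | ∃ (g : (Fin p → ℝ) → ℝ) (g' : (Fin q → ℝ) → ℝ),
        Measurable g ∧ MemLp g 2 volume ∧ Measurable g' ∧ MemLp g' 2 volume ∧
        t = ∫ z : (Fin p → ℝ) × (Fin q → ℝ), (h z - g z.1 * g' z.2) ^ 2}
      ((∑ μ, ∑ μ', (A μ μ') ^ 2) - (l2OpNorm A) ^ 2) ∧
    IsGLB {t : ℝ | ∃ (g : (Fin p → ℝ) → ℝ) (g' : (Fin q → ℝ) → ℝ),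
        Measurable g ∧ MemLp g 2 volume ∧ Measurable g' ∧ MemLp g' 2 volume ∧
        t = Real.sqrt (∫ z : (Fin p → ℝ) × (Fin q → ℝ), (h z - g z.1 * g' z.2) ^ 2) /
          Real.sqrt (∫ z : (Fin p → ℝ) × (Fin q → ℝ), (h z) ^ 2)}
      (Real.sqrt (1 - (l2OpNorm A) ^ 2 / ∑ μ, ∑ μ', (A μ μ') ^ 2)) := by
  obtain rfl : h = tensorSum A φ φ' := funext fun z => hdef z.1 z.2
  have hφ : L2Orthonormal volume φ := ⟨hφ2, horth⟩
  have hφ' : L2Orthonormal volume φ' := ⟨hφ'2, horth'⟩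
  have hmin := isLeast_integral_tensorSum_sub_mul_sq A hφ hφ' hφm hφ'm
  rw [← Measure.volume_eq_prod] at hmin
  have hnorm : ∫ z, tensorSum A φ φ' z ^ 2 = ∑ μ, ∑ μ', A μ μ' ^ 2 := by
    rw [Measure.volume_eq_prod]
    exact integral_tensorSum_sq A hφ hφ'
  have hratio : √(1 - l2OpNorm A ^ 2 / ∑ μ, ∑ μ', A μ μ' ^ 2) =
      √(∑ μ, ∑ μ', A μ μ' ^ 2 - l2OpNorm A ^ 2) / √(∑ μ, ∑ μ', A μ μ' ^ 2) := by
    rw [← Real.sqrt_div' _ (Matrix.sum_sum_sq_pos hA).le, sub_div,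
      div_self (Matrix.sum_sum_sq_pos hA).ne']
  refine ⟨hmin.isGLB, IsLeast.isGLB ⟨?_, ?_⟩⟩
  · obtain ⟨g, g', hg, hg2, hg', hg'2, he⟩ := hmin.1
    exact ⟨g, g', hg, hg2, hg', hg'2, by rw [← he, hnorm, hratio]⟩
  · rintro _ ⟨g, g', hg, hg2, hg', hg'2, rfl⟩
    rw [hnorm, hratio]
    gcongr
    exact hmin.2 ⟨g, g', hg, hg2, hg', hg'2, rfl⟩
end
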